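/- arXiv:2605.24513 — 2 statements merged into one kernel-verified Lean document; each statement's English description precedes it below -/
import Mathlib

section
/- Let g be a random vector in ℝ^d with ‖E[g]‖ ≤ L and E[‖g - E[g]‖^p] ≤ σ^p for some p ∈ (1,2]. Let ĝ = min{1, τ/‖g‖}·g (with ĝ = 0 if g = 0) for a clipping parameter τ > 0. Then ‖E[ĝ] - E[g]‖ ≤ 2^{p-1}(σ^p + L^p)/τ^{p-1}. -/
open Classical

open MeasureTheory

/-- The clipping operator: clip(v, τ) = min{1, τ/‖v‖}·v for v ≠ 0, and 0 for v = 0. -/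
noncomputable def clip {d : ℕ} (τ : ℝ) (v : EuclideanSpace ℝ (Fin d)) :
    EuclideanSpace ℝ (Fin d) :=
  if v = 0 then 0 else (min 1 (τ / ‖v‖)) • v

lemma clip_eq {d : ℕ} (τ : ℝ) (v : EuclideanSpace ℝ (Fin d)) :
    clip τ v = (min 1 (τ / ‖v‖)) • v := by
  unfold clip
  split_ifs with h
  · simp [h]
  · rfl

lemma real_add_rpow {a b p : ℝ} (ha : 0 ≤ a) (hb : 0 ≤ b) (hp : 1 ≤ p) :
    (a + b) ^ p ≤ 2 ^ (p - 1) * (a ^ p + b ^ p) := by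
  have h := NNReal.rpow_add_le_mul_rpow_add_rpow a.toNNReal b.toNNReal hp
  have := NNReal.coe_le_coe.2 h
  push_cast at this
  rwa [Real.coe_toNNReal _ ha, Real.coe_toNNReal _ hb] at this

/-- Bias bound for the clipped random vector:
‖E[ĝ] - E[g]‖ ≤ 2^{p-1}(σ^p + L^p)/τ^{p-1}. -/
theorem stmt3 {d : ℕ} {Ω : Type*} [MeasurableSpace Ω]
    (μ : Measure Ω) [IsProbabilityMeasure μ]
    (g : Ω → EuclideanSpace ℝ (Fin d)) (hg : Integrable g μ)
    (L σ τ p : ℝ) (hp1 : 1 < p) (hp2 : p ≤ 2)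
    (hL : 0 < L) (hσ : 0 < σ) (hτ : 0 < τ)
    (hmean : ‖∫ ω, g ω ∂μ‖ ≤ L)
    (hmomInt : Integrable (fun ω => ‖g ω - ∫ ω', g ω' ∂μ‖ ^ p) μ)
    (hmom : ∫ ω, ‖g ω - ∫ ω', g ω' ∂μ‖ ^ p ∂μ ≤ σ ^ p) :
    ‖(∫ ω, clip τ (g ω) ∂μ) - ∫ ω, g ω ∂μ‖
      ≤ 2 ^ (p - 1) * (σ ^ p + L ^ p) / τ ^ (p - 1) := by
  set m := ∫ ω', g ω' ∂μ with hm
  have hp0 : (0:ℝ) ≤ p - 1 := by linarith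
  -- pointwise bound
  have key : ∀ v : EuclideanSpace ℝ (Fin d), ‖clip τ v - v‖ ≤ ‖v‖ ^ p / τ ^ (p - 1) := by
    intro v
    rcases le_or_gt ‖v‖ τ with h | h
    · have : τ / ‖v‖ ≥ 1 ∨ v = 0 := by
        rcases eq_or_ne v 0 with rfl | hv
        · right; rfl
        · left
          have hv' : 0 < ‖v‖ := norm_pos_iff.2 hv
          rw [ge_iff_le, le_div_iff₀ hv']; linarith
      rcases this with h1 | rfl
      · rw [clip_eq, min_eq_left h1, one_smul, sub_self, norm_zero]
        positivity
      · simp [clip]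
        positivity
    · have hv : v ≠ 0 := by
        intro hv; rw [hv, norm_zero] at h; linarith
      have hv' : 0 < ‖v‖ := norm_pos_iff.2 hv
      have hmin : min 1 (τ / ‖v‖) = τ / ‖v‖ := by
        apply min_eq_right
        rw [div_le_one hv']; linarith
      rw [clip_eq, hmin]
      have : (τ / ‖v‖) • v - v = (τ / ‖v‖ - 1) • v := by
        rw [sub_smul, one_smul]
      rw [this, norm_smul]
      have h1 : ‖τ / ‖v‖ - 1‖ = 1 - τ / ‖v‖ := by
        rw [Real.norm_eq_abs, abs_of_nonpos]
        · ring
        · rw [sub_nonpos, div_le_one hv']; linarith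
      rw [h1]
      have h2 : (1 - τ / ‖v‖) * ‖v‖ ≤ ‖v‖ := by
        nlinarith [div_nonneg hτ.le hv'.le, mul_pos (div_pos hτ hv') hv']
      refine h2.trans ?_
      rw [le_div_iff₀ (Real.rpow_pos_of_pos hτ _)]
      have h3 : τ ^ (p - 1) ≤ ‖v‖ ^ (p - 1) :=
        Real.rpow_le_rpow hτ.le h.le hp0
      calc ‖v‖ * τ ^ (p - 1) ≤ ‖v‖ * ‖v‖ ^ (p - 1) := by
            exact mul_le_mul_of_nonneg_left h3 hv'.le
        _ = ‖v‖ ^ p := by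
            nth_rewrite 1 [← Real.rpow_one ‖v‖]
            rw [← Real.rpow_add hv']
            ring_nf
  -- measurability and integrability of clipped function
  have hclipAE : AEStronglyMeasurable (fun ω => clip τ (g ω)) μ := by
    have h1 : AEMeasurable (fun ω => min 1 (τ / ‖g ω‖)) μ :=
      aemeasurable_const.min (aemeasurable_const.div hg.aestronglyMeasurable.norm.aemeasurable)
    have h2 : AEMeasurable (fun ω => (min 1 (τ / ‖g ω‖)) • g ω) μ :=
      h1.smul hg.aemeasurable
    simpa only [clip_eq] using h2.aestronglyMeasurable
  have hclipnorm : ∀ v : EuclideanSpace ℝ (Fin d), ‖clip τ v‖ ≤ ‖v‖ := by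
    intro v
    rw [clip_eq, norm_smul]
    have h0 : 0 ≤ min 1 (τ / ‖v‖) := le_min zero_le_one (div_nonneg hτ.le (norm_nonneg v))
    have h1 : ‖min 1 (τ / ‖v‖)‖ ≤ 1 := by
      rw [Real.norm_eq_abs, abs_of_nonneg h0]; exact min_le_left _ _
    calc ‖min 1 (τ / ‖v‖)‖ * ‖v‖ ≤ 1 * ‖v‖ :=
          mul_le_mul_of_nonneg_right h1 (norm_nonneg v)
      _ = ‖v‖ := one_mul _
  have hclipInt : Integrable (fun ω => clip τ (g ω)) μ :=
    hg.mono hclipAE (Filter.Eventually.of_forall fun ω => hclipnorm (g ω))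
  -- bound on ‖g‖^p
  have hptw : ∀ ω, ‖g ω‖ ^ p ≤ 2 ^ (p - 1) * (‖g ω - m‖ ^ p + ‖m‖ ^ p) := by
    intro ω
    have h1 : ‖g ω‖ ≤ ‖g ω - m‖ + ‖m‖ := by
      calc ‖g ω‖ = ‖g ω - m + m‖ := by rw [sub_add_cancel]
        _ ≤ ‖g ω - m‖ + ‖m‖ := norm_add_le _ _
    calc ‖g ω‖ ^ p ≤ (‖g ω - m‖ + ‖m‖) ^ p :=
          Real.rpow_le_rpow (norm_nonneg _) h1 (by linarith)
      _ ≤ 2 ^ (p - 1) * (‖g ω - m‖ ^ p + ‖m‖ ^ p) :=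
          real_add_rpow (norm_nonneg _) (norm_nonneg _) hp1.le
  have hnormpAE : AEStronglyMeasurable (fun ω => ‖g ω‖ ^ p) μ := by
    exact (Real.continuous_rpow_const (by linarith : (0:ℝ) ≤ p)).comp_aestronglyMeasurable
      hg.aestronglyMeasurable.norm
  have hnormpInt : Integrable (fun ω => ‖g ω‖ ^ p) μ := by
    refine Integrable.mono' ((hmomInt.add (integrable_const (‖m‖ ^ p))).const_mul (2 ^ (p - 1)))
      hnormpAE (Filter.Eventually.of_forall fun ω => ?_)
    rw [Real.norm_eq_abs, abs_of_nonneg (Real.rpow_nonneg (norm_nonneg _) p)]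
    exact hptw ω
  -- integral of ‖g‖^p bound
  have hintp : ∫ ω, ‖g ω‖ ^ p ∂μ ≤ 2 ^ (p - 1) * (σ ^ p + L ^ p) := by
    have h1 : ∫ ω, ‖g ω‖ ^ p ∂μ ≤ ∫ ω, 2 ^ (p - 1) * (‖g ω - m‖ ^ p + ‖m‖ ^ p) ∂μ :=
      integral_mono hnormpInt ((hmomInt.add (integrable_const _)).const_mul _)
        (fun ω => hptw ω)
    have h2 : ∫ ω, 2 ^ (p - 1) * (‖g ω - m‖ ^ p + ‖m‖ ^ p) ∂μ
        = 2 ^ (p - 1) * ((∫ ω, ‖g ω - m‖ ^ p ∂μ) + ‖m‖ ^ p) := by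
      rw [integral_const_mul, integral_add hmomInt (integrable_const _), integral_const]
      simp
    have h3 : ‖m‖ ^ p ≤ L ^ p :=
      Real.rpow_le_rpow (norm_nonneg _) hmean (by linarith)
    have h4 : (0:ℝ) ≤ 2 ^ (p - 1) := Real.rpow_nonneg (by norm_num) _
    calc ∫ ω, ‖g ω‖ ^ p ∂μ ≤ 2 ^ (p - 1) * ((∫ ω, ‖g ω - m‖ ^ p ∂μ) + ‖m‖ ^ p) := by
          rw [← h2]; exact h1
      _ ≤ 2 ^ (p - 1) * (σ ^ p + L ^ p) :=
          mul_le_mul_of_nonneg_left (add_le_add hmom h3) h4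
  -- main chain
  have hdiff : (∫ ω, clip τ (g ω) ∂μ) - m = ∫ ω, (clip τ (g ω) - g ω) ∂μ :=
    (integral_sub hclipInt hg).symm
  rw [hdiff]
  calc ‖∫ ω, (clip τ (g ω) - g ω) ∂μ‖ ≤ ∫ ω, ‖clip τ (g ω) - g ω‖ ∂μ :=
        norm_integral_le_integral_norm _
    _ ≤ ∫ ω, ‖g ω‖ ^ p / τ ^ (p - 1) ∂μ :=
        integral_mono (hclipInt.sub hg).norm (hnormpInt.div_const _)
          (fun ω => key (g ω))
    _ = (∫ ω, ‖g ω‖ ^ p ∂μ) / τ ^ (p - 1) := integral_div _ _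
    _ ≤ 2 ^ (p - 1) * (σ ^ p + L ^ p) / τ ^ (p - 1) :=
        (div_le_div_iff_of_pos_right (Real.rpow_pos_of_pos hτ (p-1))).mpr hintp
end

section
/- Let f : ℝ^d → ℝ be Lipschitz and let f_δ be differentiable with ∇f_δ(x) ∈ ∂_δ f(x) for all x. Then for any γ ≥ 0, the Goldstein γ-subdifferential of f_δ is contained in the Goldstein (δ+γ)-subdifferential of f: ∂_γ f_δ(x) ⊆ ∂_{δ+γ} f(x). In particular, any (γ, ε)-Goldstein stationary point of f_δ is a (δ+γ, ε)-Goldstein stationary point of f. -/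
open Filter

/-- Clarke's generalized directional derivative of f at x in direction v. -/
noncomputable def clarkeDirDeriv {d : ℕ} (f : EuclideanSpace ℝ (Fin d) → ℝ)
    (x v : EuclideanSpace ℝ (Fin d)) : ℝ :=
  Filter.limsup (fun q : EuclideanSpace ℝ (Fin d) × ℝ => (f (q.1 + q.2 • v) - f q.1) / q.2)
    ((nhds x) ×ˢ (nhdsWithin 0 (Set.Ioi (0:ℝ))))

/-- The Clarke subdifferential of f at x. -/
def clarkeSubdiff {d : ℕ} (f : EuclideanSpace ℝ (Fin d) → ℝ)
    (x : EuclideanSpace ℝ (Fin d)) : Set (EuclideanSpace ℝ (Fin d)) :=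
  {g | ∀ v, (inner ℝ g v : ℝ) ≤ clarkeDirDeriv f x v}

/-- The Goldstein δ-subdifferential of f at x. -/
def goldsteinSubdiff {d : ℕ} (f : EuclideanSpace ℝ (Fin d) → ℝ) (δ : ℝ)
    (x : EuclideanSpace ℝ (Fin d)) : Set (EuclideanSpace ℝ (Fin d)) :=
  convexHull ℝ (⋃ y ∈ Metric.closedBall x δ, clarkeSubdiff f y)

theorem goldsteinSubdiff_subset_of_dist_le {d : ℕ} (f : EuclideanSpace ℝ (Fin d) → ℝ)
    {δ γ : ℝ} {x y : EuclideanSpace ℝ (Fin d)} (hy : dist y x ≤ γ) :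
    goldsteinSubdiff f δ y ⊆ goldsteinSubdiff f (δ + γ) x := by
  refine convexHull_mono (Set.biUnion_subset_biUnion_left fun z hz => ?_)
  rw [Metric.mem_closedBall] at hz ⊢
  exact (dist_triangle z y x).trans (add_le_add hz hy)

theorem convexHull_gradient_subset_goldsteinSubdiff {d : ℕ}
    (f fδ : EuclideanSpace ℝ (Fin d) → ℝ) {δ : ℝ}
    (hgrad : ∀ x, gradient fδ x ∈ goldsteinSubdiff f δ x) (γ : ℝ) (x : EuclideanSpace ℝ (Fin d)) :
    convexHull ℝ {v | ∃ y ∈ Metric.closedBall x γ, v = gradient fδ y}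
      ⊆ goldsteinSubdiff f (δ + γ) x := by
  refine convexHull_min ?_ (convex_convexHull ℝ _)
  rintro v ⟨y, hy, rfl⟩
  exact goldsteinSubdiff_subset_of_dist_le f (Metric.mem_closedBall.mp hy) (hgrad y)

theorem stmt8_general {d : ℕ} (f fδ : EuclideanSpace ℝ (Fin d) → ℝ) (δ : ℝ)
    (hgrad : ∀ x, gradient fδ x ∈ goldsteinSubdiff f δ x)
    (γ : ℝ) (x : EuclideanSpace ℝ (Fin d)) :
    (convexHull ℝ {v | ∃ y ∈ Metric.closedBall x γ, v = gradient fδ y}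
        ⊆ goldsteinSubdiff f (δ + γ) x) ∧
    (∀ ε : ℝ,
      (∃ g ∈ convexHull ℝ {v | ∃ y ∈ Metric.closedBall x γ, v = gradient fδ y}, ‖g‖ ≤ ε) →
      ∃ g ∈ goldsteinSubdiff f (δ + γ) x, ‖g‖ ≤ ε) := by
  have hsub := convexHull_gradient_subset_goldsteinSubdiff f fδ hgrad γ x
  exact ⟨hsub, fun ε ⟨g, hg, hgε⟩ => ⟨g, hsub hg, hgε⟩⟩

/-- Let f be L-Lipschitz and fδ be differentiable with ∇fδ(x) ∈ ∂_δ f(x) for all x.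
Then for any γ ≥ 0, conv{∇fδ(y) : ‖y - x‖ ≤ γ} ⊆ ∂_{δ+γ} f(x); in particular, any
(γ, ε)-Goldstein stationary point of fδ is a (δ+γ, ε)-Goldstein stationary point of f. -/
theorem stmt8 {d : ℕ} (f fδ : EuclideanSpace ℝ (Fin d) → ℝ) (L δ : ℝ)
    (hL : 0 ≤ L) (hδ : 0 ≤ δ)
    (hlipf : ∀ x y, |f x - f y| ≤ L * ‖x - y‖)
    (hlipfδ : ∀ x y, |fδ x - fδ y| ≤ L * ‖x - y‖)
    (hdiff : ∀ x, DifferentiableAt ℝ fδ x)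
    (hgrad : ∀ x, gradient fδ x ∈ goldsteinSubdiff f δ x)
    (γ : ℝ) (hγ : 0 ≤ γ) (x : EuclideanSpace ℝ (Fin d)) :
    (convexHull ℝ {v | ∃ y ∈ Metric.closedBall x γ, v = gradient fδ y}
        ⊆ goldsteinSubdiff f (δ + γ) x) ∧
    (∀ ε : ℝ,
      (∃ g ∈ convexHull ℝ {v | ∃ y ∈ Metric.closedBall x γ, v = gradient fδ y}, ‖g‖ ≤ ε) →
      ∃ g ∈ goldsteinSubdiff f (δ + γ) x, ‖g‖ ≤ ε) :=
  stmt8_general f fδ δ hgrad γ x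
end
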